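/- arXiv:2003.03858 — 6 statements merged into one kernel-verified Lean document; each statement's English description precedes it below -/
import Mathlib

section
/- Let S be an inverse semigroup with zero, E its semilattice of idempotents, and σ : S \ {0} → G an idempotent pure partial homomorphism to a group G (i.e., σ(st) = σ(s)σ(t) whenever s, t, st are all nonzero, and σ⁻¹(1) = E \ {0}). If s, t ∈ S \ {0} satisfy s⁻¹s = t⁻¹t and σ(s) = σ(t), then s = t. -/
/-!
Put `e = s t⁻¹` and `f = t s⁻¹`. Since `s⁻¹s = t⁻¹t` we have `s = e t` and `t = f s`, so
`e` and `f` are nonzero, and `σ e = σ s (σ t)⁻¹ = 1`, `σ f = 1`; idempotent purity makes `e`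
and `f` idempotents. Thus `s ≤ t ≤ s` in the natural partial order, and since idempotents of an
inverse semigroup commute, `s = t`.
-/

/-- An inverse semigroup with zero: a semigroup with a zero element and, for each
element `s`, a unique generalized inverse `inv s`. -/
structure InvSemigroupZero (S : Type*) [Semigroup S] where
  zero : S
  inv : S → S
  zero_mul : ∀ s, zero * s = zero
  mul_zero : ∀ s, s * zero = zero
  inv_spec₁ : ∀ s, s * inv s * s = s
  inv_spec₂ : ∀ s, inv s * s * inv s = inv s
  inv_unique : ∀ s t, s * t * s = s → t * s * t = t → t = inv s

namespace InvSemigroupZero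

variable {S : Type*} [Semigroup S]

lemma inv_inv (I : InvSemigroupZero S) (s : S) : I.inv (I.inv s) = s :=
  (I.inv_unique (I.inv s) s (I.inv_spec₂ s) (I.inv_spec₁ s)).symm

lemma inv_eq_self_of_isIdempotentElem (I : InvSemigroupZero S) {e : S} (he : IsIdempotentElem e) :
    I.inv e = e :=
  (I.inv_unique e e (by rw [he, he]) (by rw [he, he])).symm

lemma left_ne_zero_of_mul_eq (I : InvSemigroupZero S) {a b c : S} (h : a * b = c)
    (hc : c ≠ I.zero) : a ≠ I.zero := by
  rintro rfl
  rw [I.zero_mul] at h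
  exact hc h.symm

lemma right_ne_zero_of_mul_eq (I : InvSemigroupZero S) {a b c : S} (h : a * b = c)
    (hc : c ≠ I.zero) : b ≠ I.zero := by
  rintro rfl
  rw [I.mul_zero] at h
  exact hc h.symm

lemma inv_ne_zero (I : InvSemigroupZero S) {s : S} (hs : s ≠ I.zero) : I.inv s ≠ I.zero :=
  I.right_ne_zero_of_mul_eq rfl (I.left_ne_zero_of_mul_eq (I.inv_spec₁ s) hs)

lemma inv_mul_self_ne_zero (I : InvSemigroupZero S) {s : S} (hs : s ≠ I.zero) :
    I.inv s * s ≠ I.zero :=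
  I.right_ne_zero_of_mul_eq ((mul_assoc _ _ _).symm.trans (I.inv_spec₁ s)) hs

lemma isIdempotentElem_inv_mul_self (I : InvSemigroupZero S) (s : S) :
    IsIdempotentElem (I.inv s * s) := by
  calc (I.inv s * s) * (I.inv s * s) = I.inv s * (s * I.inv s * s) := by simp only [mul_assoc]
    _ = I.inv s * s := by rw [I.inv_spec₁]

lemma mul_inv_mul_of_inv_mul_eq (I : InvSemigroupZero S) {s t : S}
    (hst : I.inv s * s = I.inv t * t) : s * I.inv t * t = s := by
  rw [mul_assoc, ← hst, ← mul_assoc, I.inv_spec₁]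

lemma isIdempotentElem_mul (I : InvSemigroupZero S) {e f : S} (he : IsIdempotentElem e)
    (hf : IsIdempotentElem f) : IsIdempotentElem (e * f) := by
  set x := I.inv (e * f)
  have hx₁ : (e * f) * x * (e * f) = e * f := I.inv_spec₁ (e * f)
  have hx₂ : x * (e * f) * x = x := I.inv_spec₂ (e * f)
  -- `f x e` is also an inverse of `e f`, hence equal to `x`, and it is visibly idempotent
  have hfxe : f * x * e = x := by
    refine I.inv_unique _ _ ?_ ?_
    · calc (e * f) * (f * x * e) * (e * f) = e * ((f * f) * (x * ((e * e) * f))) := by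
            simp only [mul_assoc]
        _ = (e * f) * x * (e * f) := by rw [he, hf]; simp only [mul_assoc]
        _ = e * f := hx₁
    · calc (f * x * e) * (e * f) * (f * x * e) = f * (x * ((e * e) * ((f * f) * (x * e)))) := by
            simp only [mul_assoc]
        _ = f * (x * (e * f) * x) * e := by rw [he, hf]; simp only [mul_assoc]
        _ = f * x * e := by rw [hx₂]
  have hxx : IsIdempotentElem x := by
    calc x * x = f * (x * (e * f) * x) * e := by
          conv_lhs => rw [← hfxe]
          simp only [mul_assoc]
      _ = x := by rw [hx₂, hfxe]
  have hef : e * f = x := by rw [← I.inv_inv (e * f), I.inv_eq_self_of_isIdempotentElem hxx]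
  exact hef ▸ hxx

lemma commute_of_isIdempotentElem (I : InvSemigroupZero S) {e f : S} (he : IsIdempotentElem e)
    (hf : IsIdempotentElem f) : Commute e f := by
  have hfe : f * e = I.inv (e * f) := by
    refine I.inv_unique _ _ ?_ ?_
    · calc (e * f) * (f * e) * (e * f) = e * ((f * f) * ((e * e) * f)) := by
            simp only [mul_assoc]
        _ = (e * f) * (e * f) := by rw [he, hf]; simp only [mul_assoc]
        _ = e * f := I.isIdempotentElem_mul he hf
    · calc (f * e) * (e * f) * (f * e) = f * ((e * e) * ((f * f) * e)) := by
            simp only [mul_assoc]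
        _ = (f * e) * (f * e) := by rw [he, hf]; simp only [mul_assoc]
        _ = f * e := I.isIdempotentElem_mul hf he
  show e * f = f * e
  rw [hfe, I.inv_eq_self_of_isIdempotentElem (I.isIdempotentElem_mul he hf)]

/-- Antisymmetry of the natural partial order. -/
lemma eq_of_isIdempotentElem_mul_eq (I : InvSemigroupZero S) {e f s t : S}
    (he : IsIdempotentElem e) (hf : IsIdempotentElem f) (hs : e * t = s) (ht : f * s = t) : s = t :=
  calc s = e * (f * (e * t)) := by rw [hs, ht, hs]
    _ = f * (e * t) := by
        simp only [← mul_assoc]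
        rw [(I.commute_of_isIdempotentElem he hf).eq, mul_assoc f e e, he]
    _ = t := by rw [hs, ht]

lemma map_inv (I : InvSemigroupZero S) {G : Type*} [Group G] {σ : S → G}
    (hσmul : ∀ s t : S, s ≠ I.zero → t ≠ I.zero → s * t ≠ I.zero →
      σ (s * t) = σ s * σ t)
    (hσpure : ∀ s : S, s ≠ I.zero → (σ s = 1 ↔ s * s = s)) {u : S} (hu : u ≠ I.zero) :
    σ (I.inv u) = (σ u)⁻¹ := by
  refine eq_inv_of_mul_eq_one_left ?_
  rw [← hσmul _ _ (I.inv_ne_zero hu) hu (I.inv_mul_self_ne_zero hu)]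
  exact (hσpure _ (I.inv_mul_self_ne_zero hu)).2 (I.isIdempotentElem_inv_mul_self u)

lemma isIdempotentElem_mul_inv_of_map_eq (I : InvSemigroupZero S) {G : Type*} [Group G]
    {σ : S → G}
    (hσmul : ∀ s t : S, s ≠ I.zero → t ≠ I.zero → s * t ≠ I.zero →
      σ (s * t) = σ s * σ t)
    (hσpure : ∀ s : S, s ≠ I.zero → (σ s = 1 ↔ s * s = s)) {s t : S} (hs : s ≠ I.zero)
    (ht : t ≠ I.zero) (hst : I.inv s * s = I.inv t * t) (hσ : σ s = σ t) :
    IsIdempotentElem (s * I.inv t) := by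
  have he : s * I.inv t ≠ I.zero :=
    I.left_ne_zero_of_mul_eq (I.mul_inv_mul_of_inv_mul_eq hst) hs
  refine (hσpure _ he).1 ?_
  rw [hσmul _ _ hs (I.inv_ne_zero ht) he, I.map_inv hσmul hσpure ht, hσ, mul_inv_cancel]

end InvSemigroupZero

/-- If `σ` is an idempotent pure partial homomorphism on an inverse semigroup with zero,
and `s, t` are nonzero with `s⁻¹s = t⁻¹t` and `σ(s) = σ(t)`, then `s = t`. -/
theorem stmt0 {S G : Type*} [Semigroup S] [Group G]
    (I : InvSemigroupZero S) (σ : S → G)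
    (hσmul : ∀ s t : S, s ≠ I.zero → t ≠ I.zero → s * t ≠ I.zero →
      σ (s * t) = σ s * σ t)
    (hσpure : ∀ s : S, s ≠ I.zero → (σ s = 1 ↔ s * s = s))
    (s t : S) (hs : s ≠ I.zero) (ht : t ≠ I.zero)
    (hst : I.inv s * s = I.inv t * t) (hσ : σ s = σ t) :
    s = t :=
  I.eq_of_isIdempotentElem_mul_eq
    (I.isIdempotentElem_mul_inv_of_map_eq hσmul hσpure hs ht hst hσ)
    (I.isIdempotentElem_mul_inv_of_map_eq hσmul hσpure ht hs hst.symm hσ.symm)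
    (I.mul_inv_mul_of_inv_mul_eq hst) (I.mul_inv_mul_of_inv_mul_eq hst.symm)
end

section
/- Let P be a left-cancellative right LCM monoid, i.e., every nonempty constructible right ideal of P is a principal right ideal pP. Let P_P denote the group of bijections P → P expressible as finite compositions of left-multiplication maps x ↦ px (p ∈ P) and their set-theoretic inverses. Then P_P equals P*, the group of invertible elements of P, where u ∈ P* is identified with the bijection x ↦ ux. -/
/-!
Under the right LCM condition the partial maps `p q⁻¹ : q x ↦ p x`, together with the empty map,
are closed under inversion and composition: `q⁻¹ r = q' r'⁻¹` when `r r' = q q'` generates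
`rP ∩ qP`, and `q⁻¹ r = ∅` when `rP ∩ qP = ∅`. Hence every element of `P_P` is such a `p q⁻¹`.
Being defined on all of `P` forces `1 ∈ qP`, and being onto forces `1 ∈ pP`; by left
cancellation one-sided inverses are two-sided, so `p` and `q` are invertible and `p q⁻¹` is left
multiplication by the unit `p q⁻¹ ∈ P*`.
-/

namespace Stmt6

variable {P : Type*} [Monoid P]

/-- The graph of the left-multiplication map `x ↦ p·x`. -/
def graph (p : P) : Set (P × P) := {q | q.2 = p * q.1}

/-- Composition of relations (partial maps), `rcomp R S = R ∘ S`. -/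
def rcomp (R S : Set (P × P)) : Set (P × P) := {q | ∃ y, (q.1, y) ∈ S ∧ (y, q.2) ∈ R}

/-- The (set-theoretic) inverse of a relation. -/
def rflip (R : Set (P × P)) : Set (P × P) := {q | (q.2, q.1) ∈ R}

/-- Relations expressible as compositions of finitely many left-multiplication maps and
their set-theoretic inverses. -/
inductive Gen : Set (P × P) → Prop
  | basic (p : P) : Gen (graph p)
  | flip {R : Set (P × P)} : Gen R → Gen (rflip R)
  | comp {R S : Set (P × P)} : Gen R → Gen S → Gen (rcomp R S)

/-- `R` is the graph of a bijection `P → P`. -/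
def IsBijGraph (R : Set (P × P)) : Prop :=
  (∀ x : P, ∃! y, (x, y) ∈ R) ∧ (∀ y : P, ∃! x, (x, y) ∈ R)

/-- The partial bijection `p q⁻¹ : qP → pP`, `q x ↦ p x`. -/
def mulInvGraph (p q : P) : Set (P × P) := {a | ∃ x, a.1 = q * x ∧ a.2 = p * x}

theorem graph_eq_mulInvGraph_one (p : P) : graph p = mulInvGraph p 1 := by
  ext ⟨a, b⟩
  simp [graph, mulInvGraph]

theorem rflip_mulInvGraph (p q : P) : rflip (mulInvGraph p q) = mulInvGraph q p := by
  ext ⟨a, b⟩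
  simp [rflip, mulInvGraph, and_comm]

@[simp]
theorem rcomp_empty_left (S : Set (P × P)) : rcomp ∅ S = ∅ := by
  ext; simp [rcomp]

@[simp]
theorem rcomp_empty_right (R : Set (P × P)) : rcomp R ∅ = ∅ := by
  ext; simp [rcomp]

theorem rcomp_mulInvGraph_of_inter_eq_empty (p s : P) {q r : P}
    (h : Set.range (r * ·) ∩ Set.range (q * ·) = ∅) :
    rcomp (mulInvGraph p q) (mulInvGraph r s) = ∅ := by
  refine Set.eq_empty_of_forall_notMem ?_
  rintro a ⟨y, ⟨x, -, hx⟩, ⟨z, hz, -⟩⟩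
  exact h.subset ⟨⟨x, hx.symm⟩, ⟨z, hz.symm⟩⟩

theorem rcomp_mulInvGraph_of_inter_eq_range [IsLeftCancelMul P] (p s : P) {q r t r' q' : P}
    (ht : Set.range (r * ·) ∩ Set.range (q * ·) = Set.range (t * ·))
    (hr : r * r' = t) (hq : q * q' = t) :
    rcomp (mulInvGraph p q) (mulInvGraph r s) = mulInvGraph (p * q') (s * r') := by
  ext a
  constructor
  · rintro ⟨y, ⟨x, hx₁, hx₂⟩, ⟨z, hz₁, hz₂⟩⟩
    obtain ⟨w, rfl⟩ : y ∈ Set.range (t * ·) := ht ▸ ⟨⟨x, hx₂.symm⟩, ⟨z, hz₁.symm⟩⟩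
    have hx : x = r' * w := mul_left_cancel (a := r) (by rw [← hx₂, ← mul_assoc, hr])
    have hz : z = q' * w := mul_left_cancel (a := q) (by rw [← hz₁, ← mul_assoc, hq])
    exact ⟨w, by rw [hx₁, hx, mul_assoc], by rw [hz₂, hz, mul_assoc]⟩
  · rintro ⟨w, hw₁, hw₂⟩
    exact ⟨t * w, ⟨r' * w, by rw [hw₁, mul_assoc], by rw [← hr, mul_assoc]⟩,
      ⟨q' * w, by rw [← hq, mul_assoc], by rw [hw₂, mul_assoc]⟩⟩

theorem Gen.eq_empty_or_eq_mulInvGraph [IsLeftCancelMul P]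
    (hLCM : ∀ p q : P, (Set.range (p * ·) ∩ Set.range (q * ·) = ∅) ∨
      ∃ r : P, Set.range (p * ·) ∩ Set.range (q * ·) = Set.range (r * ·))
    {R : Set (P × P)} (h : Gen R) : R = ∅ ∨ ∃ p q : P, R = mulInvGraph p q := by
  induction h with
  | basic p => exact .inr ⟨p, 1, graph_eq_mulInvGraph_one p⟩
  | flip _ ih =>
    rcases ih with rfl | ⟨p, q, rfl⟩
    · exact .inl rfl
    · exact .inr ⟨q, p, rflip_mulInvGraph p q⟩
  | comp _ _ ihR ihS =>
    rcases ihR with rfl | ⟨p, q, rfl⟩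
    · exact .inl (rcomp_empty_left _)
    rcases ihS with rfl | ⟨r, s, rfl⟩
    · exact .inl (rcomp_empty_right _)
    rcases hLCM r q with hempty | ⟨t, ht⟩
    · exact .inl (rcomp_mulInvGraph_of_inter_eq_empty p s hempty)
    · obtain ⟨⟨r', hr⟩, ⟨q', hq⟩⟩ : t ∈ Set.range (r * ·) ∩ Set.range (q * ·) :=
        ht ▸ ⟨1, mul_one t⟩
      exact .inr ⟨_, _, rcomp_mulInvGraph_of_inter_eq_range p s ht hr hq⟩

theorem isUnit_of_isBijGraph_mulInvGraph [IsDedekindFiniteMonoid P] {p q : P}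
    (h : IsBijGraph (mulInvGraph p q)) : IsUnit p ∧ IsUnit q := by
  obtain ⟨-, ⟨x, -, hx : 1 = p * x⟩, -⟩ := h.2 1
  obtain ⟨-, ⟨y, hy : 1 = q * y, -⟩, -⟩ := h.1 1
  exact ⟨.of_mul_eq_one x hx.symm, .of_mul_eq_one y hy.symm⟩

theorem mulInvGraph_eq_graph (p : P) {q : P} (hq : IsUnit q) :
    mulInvGraph p q = graph (p * ↑hq.unit⁻¹) := by
  ext ⟨a, b⟩
  constructor
  · rintro ⟨x, rfl, rfl⟩
    show p * x = p * ↑hq.unit⁻¹ * (q * x)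
    rw [mul_assoc, ← mul_assoc _ q, hq.val_inv_mul, one_mul]
  · rintro (rfl : b = p * ↑hq.unit⁻¹ * a)
    exact ⟨↑hq.unit⁻¹ * a, by simp [← mul_assoc], mul_assoc _ _ _⟩

theorem not_isBijGraph_empty : ¬IsBijGraph (∅ : Set (P × P)) :=
  fun h ↦ by simpa using h.1 1

theorem isBijGraph_graph {u : P} (hu : IsUnit u) : IsBijGraph (graph u) := by
  refine ⟨fun x ↦ ⟨u * x, rfl, fun _ hy ↦ hy⟩, fun y ↦ ⟨↑hu.unit⁻¹ * y, ?_, fun x hx ↦ ?_⟩⟩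
  · simp [graph, ← mul_assoc]
  · simp [show y = u * x from hx, ← mul_assoc]

/-- For a left-cancellative right LCM monoid `P`, the group `P_P` of bijections of `P`
expressible as compositions of left multiplications and their inverses consists exactly
of the left multiplications by invertible elements of `P`. -/
theorem stmt6
    (hcanc : ∀ p x y : P, p * x = p * y → x = y)
    (hLCM : ∀ p q : P, (Set.range (p * ·) ∩ Set.range (q * ·) = ∅) ∨
      ∃ r : P, Set.range (p * ·) ∩ Set.range (q * ·) = Set.range (r * ·))
    (R : Set (P × P)) :
    (Gen R ∧ IsBijGraph R) ↔
      ∃ u : P, (∃ v : P, u * v = 1 ∧ v * u = 1) ∧ R = graph u := by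
  have : IsLeftCancelMul P := ⟨hcanc⟩
  simp only [← isUnit_iff_exists]
  constructor
  · rintro ⟨hgen, hbij⟩
    rcases hgen.eq_empty_or_eq_mulInvGraph hLCM with rfl | ⟨p, q, rfl⟩
    · exact absurd hbij not_isBijGraph_empty
    obtain ⟨hp, hq⟩ := isUnit_of_isBijGraph_mulInvGraph hbij
    exact ⟨_, hp.mul hq.unit⁻¹.isUnit, mulInvGraph_eq_graph p hq⟩
  · rintro ⟨u, hu, rfl⟩
    exact ⟨.basic u, isBijGraph_graph hu⟩

end Stmt6
end

section
/- In the Baumslag-Solitar group G = BS(k, l) = ⟨a, b | a b^k = b^l a⟩ with k < −1 and l > 0, let P = BS(k,l)^+ be the submonoid generated by a and b. Then there is no p ∈ P with g P ∩ P = p P for g = a b a⁻¹. Consequently, P ⊆ G does not satisfy the Toeplitz condition. -/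
/-- The defining relation of the Baumslag-Solitar group `BS(k,l) = ⟨a,b | a b^k = b^l a⟩`,
with `a` = generator `true` and `b` = generator `false`. -/
def bsRel (k l : ℤ) : Set (FreeGroup Bool) :=
  {FreeGroup.of true * (FreeGroup.of false) ^ k * (FreeGroup.of true)⁻¹ *
    ((FreeGroup.of false) ^ l)⁻¹}

/-- The Baumslag-Solitar group `BS(k, l)`. -/
abbrev BS (k l : ℤ) : Type := PresentedGroup (bsRel k l)

/-- The generator `a` of `BS(k,l)`. -/
def bsA (k l : ℤ) : BS k l := PresentedGroup.of true

/-- The generator `b` of `BS(k,l)`. -/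
def bsB (k l : ℤ) : BS k l := PresentedGroup.of false

/-- The Baumslag-Solitar monoid `BS(k,l)⁺`, identified with the submonoid of `BS(k,l)`
generated by `a` and `b`. -/
def bsP (k l : ℤ) : Submonoid (BS k l) := Submonoid.closure {bsA k l, bsB k l}

/-!
Let `#a : BS(k,l) → ℤ` count the letter `a`; an element of `P` with count `0` is some
`b^u`, one with count `1` is some `b^s a b^t`. As `ab = g a ∈ gP ∩ P = pP`, `p` has count at
most `1`.
If `p = b^u`, then `b^u ∈ gP` makes `aba⁻¹` a power of `b`. This is impossible when `|k| ≥ 2`: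
the affine action `a ↦ (x ↦ (l/k) x)`, `b ↦ (x ↦ x + 1)` on `ℚ` first forces `k ∣ l`, and then
`BS(k,l)` acts on `ZMod |k| × ZMod 2` with `b` translating and `a` a transposition.
If `p = b^s a b^t`, note that `a b^N ∈ P` for every `N` (push `b`'s through `a = b^l a b^{-k}`),
so `p` would left-divide every `a b^n` in `P`; evaluating the affine action at `0` rules this
out for `n = t + sk - 1`.
-/

namespace BS

variable {k l : ℤ}

theorem a_mul_zpow_b_mul_a_inv : bsA k l * bsB k l ^ k * (bsA k l)⁻¹ = bsB k l ^ l := by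
  have h := PresentedGroup.one_of_mem (rels := bsRel k l) rfl
  simp only [map_mul, map_zpow, map_inv] at h
  exact mul_inv_eq_one.mp h

section lift

variable {H : Type*} [Group H] (x y : H) (h : x * y ^ k * x⁻¹ = y ^ l)

def lift : BS k l →* H :=
  PresentedGroup.toGroup (f := fun i => cond i x y) (by
    rintro r rfl
    simpa [mul_inv_eq_one] using h)

@[simp]
theorem lift_a : lift x y h (bsA k l) = x := PresentedGroup.toGroup.of _

@[simp]
theorem lift_b : lift x y h (bsB k l) = y := PresentedGroup.toGroup.of _

end lift

def aCount (x : BS k l) : ℤ :=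
  (lift (Multiplicative.ofAdd 1) 1 (by simp) x).toAdd

@[simp]
theorem aCount_mul (x y : BS k l) : aCount (x * y) = aCount x + aCount y := by
  simp [aCount]

@[simp]
theorem aCount_inv (x : BS k l) : aCount x⁻¹ = -aCount x := by
  simp [aCount]

@[simp]
theorem aCount_a : aCount (bsA k l) = 1 := by
  simp [aCount]

@[simp]
theorem aCount_b : aCount (bsB k l) = 0 := by
  simp [aCount]

@[simp]
theorem aCount_zpow_b (n : ℤ) : aCount (bsB k l ^ n) = 0 := by
  simp [aCount]

@[simp]
theorem aCount_pow_b (n : ℕ) : aCount (bsB k l ^ n) = 0 := by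
  simpa using aCount_zpow_b (k := k) (l := l) n

theorem a_mem_bsP : bsA k l ∈ bsP k l := Submonoid.subset_closure (by simp)

theorem b_mem_bsP : bsB k l ∈ bsP k l := Submonoid.subset_closure (by simp)

theorem mem_bsP_cases {x : BS k l} (hx : x ∈ bsP k l) :
    (aCount x = 0 ∧ ∃ u : ℕ, x = bsB k l ^ u) ∨
      (aCount x = 1 ∧ ∃ s t : ℕ, x = bsB k l ^ s * bsA k l * bsB k l ^ t) ∨
      2 ≤ aCount x := by
  induction hx using Submonoid.closure_induction_left with
  | one => exact .inl ⟨by simp [aCount], 0, by simp⟩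
  | mul_left z hz y _ ih =>
    rcases hz with rfl | rfl
    · rcases ih with ⟨hy, u, rfl⟩ | ⟨hy, -⟩ | hy
      · exact .inr (.inl ⟨by simp, 0, u, by simp⟩)
      all_goals exact .inr (.inr (by simp only [aCount_mul, aCount_a]; omega))
    · rcases ih with ⟨hy, u, rfl⟩ | ⟨hy, s, t, rfl⟩ | hy
      · exact .inl ⟨by simp, u + 1, by rw [pow_succ']⟩
      · exact .inr (.inl ⟨by simp, s + 1, t, by simp only [pow_succ', mul_assoc]⟩)
      · exact .inr (.inr (by simpa using hy))

theorem aCount_nonneg {x : BS k l} (hx : x ∈ bsP k l) : 0 ≤ aCount x := by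
  rcases mem_bsP_cases hx with ⟨h, -⟩ | ⟨h, -⟩ | h <;> omega

theorem exists_eq_pow_b {x : BS k l} (hx : x ∈ bsP k l) (h : aCount x = 0) :
    ∃ u : ℕ, x = bsB k l ^ u := by
  rcases mem_bsP_cases hx with ⟨-, hu⟩ | ⟨h', -⟩ | h' <;> first | exact hu | omega

theorem exists_eq_pow_b_mul_a_mul_pow_b {x : BS k l} (hx : x ∈ bsP k l) (h : aCount x = 1) :
    ∃ s t : ℕ, x = bsB k l ^ s * bsA k l * bsB k l ^ t := by
  rcases mem_bsP_cases hx with ⟨h', -⟩ | ⟨-, hst⟩ | h' <;> first | exact hst | omega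

theorem a_mul_zpow_b_eq (N m : ℤ) :
    bsA k l * bsB k l ^ N = bsB k l ^ (l * m) * bsA k l * bsB k l ^ (N - k * m) := by
  have h : bsA k l * bsB k l ^ (k * m) * (bsA k l)⁻¹ = bsB k l ^ (l * m) := by
    rw [zpow_mul, zpow_mul, ← conj_zpow, a_mul_zpow_b_mul_a_inv]
  rw [← h]
  simp only [mul_assoc, inv_mul_cancel_left, ← zpow_add, add_sub_cancel]

theorem zpow_b_mem_bsP {n : ℤ} (hn : 0 ≤ n) : bsB k l ^ n ∈ bsP k l := by
  lift n to ℕ using hn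
  simpa using pow_mem b_mem_bsP n

theorem a_mul_zpow_b_mem_bsP (hk : k < 0) (hl : 0 ≤ l) (N : ℤ) :
    bsA k l * bsB k l ^ N ∈ bsP k l := by
  rw [a_mul_zpow_b_eq N |N|]
  refine mul_mem (mul_mem (zpow_b_mem_bsP (by positivity)) a_mem_bsP) (zpow_b_mem_bsP ?_)
  nlinarith [le_abs_self N, neg_abs_le N, abs_nonneg N]

section affineRep

variable (hk : k ≠ 0) (hl : l ≠ 0)

def affineRep : BS k l →* Equiv.Perm ℚ :=
  lift (Units.mulLeft (Units.mk0 ((l : ℚ) / k) (by simp [hk, hl]))) (Equiv.addLeft 1) (by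
    ext q
    simp only [Equiv.zsmul_addLeft, zsmul_eq_mul, mul_one, Equiv.Perm.inv_def,
      Units.mulLeft_symm, Equiv.Perm.coe_mul, Units.mulLeft_apply, Units.val_mk0,
      Equiv.coe_addLeft, Units.val_inv_eq_inv_val, inv_div, Function.comp_apply]
    field_simp)

@[simp]
theorem affineRep_a (q : ℚ) : affineRep hk hl (bsA k l) q = l / k * q := by
  simp [affineRep]

@[simp]
theorem affineRep_zpow_b (n : ℤ) (q : ℚ) : affineRep hk hl (bsB k l ^ n) q = n + q := by
  simp [affineRep]

@[simp]
theorem affineRep_pow_b (n : ℕ) (q : ℚ) : affineRep hk hl (bsB k l ^ n) q = n + q := by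
  simpa using affineRep_zpow_b hk hl n q

@[simp]
theorem affineRep_b (q : ℚ) : affineRep hk hl (bsB k l) q = 1 + q := by
  simpa using affineRep_zpow_b hk hl 1 q

end affineRep

theorem conj_b_ne_zpow_b_of_dvd {m : ℕ} (hm : m ≠ 1) (hk : (m : ℤ) ∣ k) (hl : (m : ℤ) ∣ l)
    (n : ℤ) : bsA k l * bsB k l * (bsA k l)⁻¹ ≠ bsB k l ^ n := by
  have hpow (j : ℤ) :
      Equiv.addLeft ((1 : ZMod m), (0 : ZMod 2)) ^ j = Equiv.addLeft ((j : ZMod m), 0) := by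
    rw [Equiv.zsmul_addLeft]
    simp [Prod.smul_mk]
  have hvanish {j : ℤ} (hj : (m : ℤ) ∣ j) : ((j : ZMod m), (0 : ZMod 2)) = 0 := by
    simp [(ZMod.intCast_zmod_eq_zero_iff_dvd j m).mpr hj]
  -- `b` acts with order dividing `m` and `a` is a transposition, so `aba⁻¹` moves `(0, 0)` off
  -- its `b`-orbit `ZMod m × {0}`.
  let ψ : BS k l →* Equiv.Perm (ZMod m × ZMod 2) :=
    lift (Equiv.swap (0, 0) (0, 1)) (Equiv.addLeft (1, 0)) (by
      rw [hpow, hpow, hvanish hk, hvanish hl]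
      simp)
  intro h
  have := congrArg (fun g => (ψ g (0, 0)).2) h
  have hone : (1 : ZMod m) ≠ 0 := by
    rw [← Nat.cast_one, ne_eq, ZMod.natCast_eq_zero_iff, Nat.dvd_one]
    exact hm
  simp [ψ, hpow, Equiv.swap_apply_def, hone] at this

theorem eq_mul_of_conj_b_eq_zpow_b (hk : k ≠ 0) (hl : l ≠ 0) {n : ℤ}
    (h : bsA k l * bsB k l * (bsA k l)⁻¹ = bsB k l ^ n) : l = k * n := by
  have h' : bsA k l * bsB k l = bsB k l ^ n * bsA k l := by rw [← h, inv_mul_cancel_right]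
  have := congrArg (fun g => affineRep hk hl g 0) h'
  simp only [map_mul, Equiv.Perm.mul_apply, affineRep_a, affineRep_b, affineRep_zpow_b,
    add_zero, mul_one, mul_zero] at this
  field_simp at this
  exact_mod_cast this

theorem conj_b_ne_zpow_b (hk : 2 ≤ k.natAbs) (hl : l ≠ 0) (n : ℤ) :
    bsA k l * bsB k l * (bsA k l)⁻¹ ≠ bsB k l ^ n := fun h =>
  conj_b_ne_zpow_b_of_dvd (m := k.natAbs) (by omega) Int.natAbs_dvd_self
    (by rw [eq_mul_of_conj_b_eq_zpow_b (by omega) hl h]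
        exact Int.natAbs_dvd.mpr (dvd_mul_right k n))
    n h

theorem conj_b_mul_ne_pow_b (hk : 2 ≤ k.natAbs) (hl : l ≠ 0) {q : BS k l} (hq : q ∈ bsP k l)
    (u : ℕ) : bsA k l * bsB k l * (bsA k l)⁻¹ * q ≠ bsB k l ^ u := by
  intro h
  obtain ⟨v, rfl⟩ := exists_eq_pow_b hq (by simpa using congrArg aCount h)
  refine conj_b_ne_zpow_b hk hl (u - v) ?_
  rw [zpow_sub, zpow_natCast, zpow_natCast, ← h, mul_inv_cancel_right]

theorem pow_b_mul_a_mul_pow_b_mul_ne (hk : k < 0) (hl : 0 < l) (s t : ℕ) {x : BS k l}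
    (hx : x ∈ bsP k l) :
    bsB k l ^ s * bsA k l * bsB k l ^ t * x ≠ bsA k l * bsB k l ^ ((t : ℤ) + s * k - 1) := by
  intro h
  obtain ⟨w, rfl⟩ := exists_eq_pow_b hx (by simpa using congrArg aCount h)
  -- at `0` the affine action gives `s + (l/k)(t + w) = (l/k) n`, i.e. `l w = s k (l - 1) - l < 0`
  have := congrArg (fun g => affineRep hk.ne hl.ne' g 0) h
  simp only [map_mul, Equiv.Perm.mul_apply, affineRep_a, affineRep_pow_b, affineRep_zpow_b,
    add_zero] at this
  have hk' : (k : ℚ) ≠ 0 := by exact_mod_cast hk.ne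
  field_simp at this
  have hZ : s * k + l * (t + w) = l * (t + s * k - 1) := by exact_mod_cast this
  have hlw : 0 ≤ l * w := by positivity
  have hskl : s * k * (l - 1) ≤ 0 :=
    mul_nonpos_of_nonpos_of_nonneg (mul_nonpos_of_nonneg_of_nonpos s.cast_nonneg hk.le)
      (by omega)
  linarith

end BS

open BS

/-- For `k < -1` and `l > 0`, with `P = BS(k,l)⁺ ⊆ G = BS(k,l)` and `g = a b a⁻¹`, there
is no `p ∈ P` with `gP ∩ P = pP`; hence `P ⊆ G` does not satisfy the Toeplitz
condition. -/
theorem stmt9 (k l : ℤ) (hk : k < -1) (hl : 0 < l) :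
    ¬ ∃ p ∈ bsP k l,
      ((bsA k l * bsB k l * (bsA k l)⁻¹) * ·) '' (bsP k l : Set (BS k l)) ∩
          (bsP k l : Set (BS k l))
        = (p * ·) '' (bsP k l : Set (BS k l)) := by
  rintro ⟨p, hp, hset⟩
  have hmem (y : BS k l) : ((∃ x ∈ bsP k l, bsA k l * bsB k l * (bsA k l)⁻¹ * x = y) ∧
      y ∈ bsP k l) ↔ ∃ x ∈ bsP k l, p * x = y := by
    simpa only [Set.mem_inter_iff, Set.mem_image, SetLike.mem_coe] using Set.ext_iff.mp hset y
  obtain ⟨x, hx, hpx⟩ := (hmem (bsA k l * bsB k l)).mp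
    ⟨⟨bsA k l, a_mem_bsP, by group⟩, mul_mem a_mem_bsP b_mem_bsP⟩
  have hcount : aCount p ≤ 1 := by
    have := congrArg aCount hpx
    simp only [aCount_mul, aCount_a, aCount_b] at this
    linarith [aCount_nonneg hx]
  rcases (aCount_nonneg hp).eq_or_lt with h0 | h1
  · obtain ⟨u, rfl⟩ := exists_eq_pow_b hp h0.symm
    obtain ⟨⟨q, hq, hgq⟩, -⟩ := (hmem _).mpr ⟨1, one_mem _, mul_one _⟩
    exact conj_b_mul_ne_pow_b (by omega) hl.ne' hq u hgq
  · obtain ⟨s, t, rfl⟩ := exists_eq_pow_b_mul_a_mul_pow_b hp (by omega)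
    obtain ⟨y, hy, hpy⟩ := (hmem (bsA k l * bsB k l ^ ((t : ℤ) + s * k - 1))).mp
      ⟨⟨_, a_mul_zpow_b_mem_bsP (by omega) hl.le ((t : ℤ) + s * k - 2), by group⟩,
        a_mul_zpow_b_mem_bsP (by omega) hl.le _⟩
    exact pow_b_mul_a_mul_pow_b_mul_ne (by omega) hl s t hy hpy
end

section
/- Let K be a number field with ring of integers R, 𝔪 = 𝔪_∞𝔪_0 a modulus, Γ ≤ (R/𝔪)* a subgroup, R_{𝔪,Γ} the associated congruence monoid, and K_{𝔪,Γ} = {x ∈ K_𝔪 : [x]_𝔪 ∈ Γ}. Let 𝔞 be a nonzero ideal of R coprime to 𝔪_0, and set 𝔞_{𝔪,Γ} = 𝔞 ∩ R_{𝔪,Γ}. Consider the right action of G = (R_𝔪⁻¹R) ⋊ K_{𝔪,Γ} on subsets of R_𝔪⁻¹R ⋊ K_{𝔪,Γ}. Then the stabilizer {g ∈ G : (R × 𝔞_{𝔪,Γ})·g = R × 𝔞_{𝔪,Γ}} equals (R:𝔞) ⋊ R*_{𝔪,Γ}, where (R:𝔞) = {x ∈ K : x𝔞 ⊆ R} and R*_{𝔪,Γ}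 = R* ∩ K_{𝔪,Γ}. -/
/-!
If `(b, a)` stabilises `R × 𝔞_{𝔪,Γ}`, translating the points `(0, s)`, `s ∈ 𝔞_{𝔪,Γ}`, shows that
`s b ∈ R` and `s a, s a⁻¹ ∈ 𝔞`; as `𝔞_{𝔪,Γ}` generates `𝔞`, this gives `b 𝔞 ⊆ R` and `a 𝔞 = 𝔞`.
Writing `a = x / y`, the ideals `(x) 𝔞` and `(y) 𝔞` coincide, and cancellation in the Dedekind
domain `R` makes `a` a unit. Conversely, a unit `u ∈ K_{𝔪,Γ}` preserves `R_{𝔪,Γ}` because the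
congruence monoid is saturated: `d c = e f` with `c, e, f ∈ R_{𝔪,Γ}` forces `d ∈ R_{𝔪,Γ}`.
-/

section FractionField

variable {R K : Type*} [CommRing R] [Field K] [Algebra R K]

theorem exists_algebraMap_eq_mul_of_mem_span {S : Set R} {J : Ideal R} {g : K}
    (h : ∀ s ∈ S, ∃ b ∈ J, algebraMap R K b = algebraMap R K s * g)
    {a : R} (ha : a ∈ Ideal.span S) : ∃ b ∈ J, algebraMap R K b = algebraMap R K a * g := by
  have hle : Ideal.span S ≤ (Submodule.map (Algebra.linearMap R K) J).comap
      (LinearMap.mulRight R g ∘ₗ Algebra.linearMap R K) :=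
    Submodule.span_le.mpr fun s hs => by simpa using h s hs
  simpa using hle ha

def affineMul (q g : K × K) : K × K := (q.1 + q.2 * g.1, q.2 * g.2)

variable (K) in
def ringProd (S : Set R) : Set (K × K) :=
  {q | (∃ x : R, q.1 = algebraMap R K x) ∧ ∃ a ∈ S, q.2 = algebraMap R K a}

theorem zero_algebraMap_mem_ringProd {S : Set R} {a : R} (ha : a ∈ S) :
    ((0 : K), algebraMap R K a) ∈ ringProd K S :=
  ⟨⟨0, (map_zero _).symm⟩, a, ha, rfl⟩

theorem exists_algebraMap_eq_mul_of_image_subset {S : Set R} {g : K × K}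
    (h : (affineMul · g) '' ringProd K S ⊆ ringProd K S) {a : R} (ha : a ∈ S) :
    (∃ x : R, algebraMap R K x = algebraMap R K a * g.1) ∧
      ∃ b ∈ S, algebraMap R K b = algebraMap R K a * g.2 := by
  obtain ⟨⟨x, hx⟩, b, hb, hb'⟩ := h ⟨_, zero_algebraMap_mem_ringProd ha, rfl⟩
  exact ⟨⟨x, by simpa [affineMul] using hx.symm⟩, b, hb, hb'.symm⟩

theorem exists_algebraMap_eq_mul_of_subset_image {S : Set R} {g : K × K}
    (h : ringProd K S ⊆ (affineMul · g) '' ringProd K S) {b : R} (hb : b ∈ S) :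
    ∃ a ∈ S, algebraMap R K b = algebraMap R K a * g.2 := by
  obtain ⟨q, ⟨-, a, ha, hqa⟩, hq⟩ := h (zero_algebraMap_mem_ringProd hb)
  exact ⟨a, ha, by rw [← hqa]; exact (congrArg Prod.snd hq).symm⟩

theorem image_affineMul_ringProd {S : Set R} {𝔞 : Ideal R} (hS : S ⊆ 𝔞) {t : K}
    (ht : ∀ a ∈ 𝔞, ∃ x : R, t * algebraMap R K a = algebraMap R K x) {u : Rˣ}
    (hSu : ∀ s ∈ S, s * u ∈ S ∧ s * ↑u⁻¹ ∈ S) :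
    (affineMul · (t, algebraMap R K u)) '' ringProd K S = ringProd K S := by
  apply Set.Subset.antisymm
  · rintro - ⟨q, ⟨⟨x, hx⟩, a, ha, hqa⟩, rfl⟩
    obtain ⟨y, hy⟩ := ht a (hS ha)
    refine ⟨⟨x + y, ?_⟩, a * u, (hSu a ha).1, ?_⟩
    · simp only [affineMul, map_add, hx, hqa, ← hy, mul_comm t]
    · simp only [affineMul, map_mul, hqa]
  · rintro q ⟨⟨x, hx⟩, b, hb, hqb⟩
    obtain ⟨y, hy⟩ := ht _ (hS ((hSu b hb).2))
    refine ⟨(algebraMap R K (x - y), algebraMap R K (b * ↑u⁻¹)),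
      ⟨⟨x - y, rfl⟩, _, (hSu b hb).2, rfl⟩, Prod.ext ?_ ?_⟩
    · simp only [affineMul, map_sub, ← hy, hx]
      ring
    · simp only [affineMul, ← map_mul, hqb, mul_assoc, Units.inv_mul, mul_one]

variable [IsDedekindDomain R] [IsFractionRing R K]

theorem exists_unit_eq_of_mul_ideal_eq {𝔞 : Ideal R} (h𝔞 : 𝔞 ≠ ⊥) {g : K} (hg : g ≠ 0)
    (hmul : ∀ a ∈ 𝔞, ∃ b ∈ 𝔞, algebraMap R K b = algebraMap R K a * g)
    (hinv : ∀ a ∈ 𝔞, ∃ b ∈ 𝔞, algebraMap R K b = algebraMap R K a * g⁻¹) :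
    ∃ u : Rˣ, algebraMap R K u = g := by
  obtain ⟨x, y, hy, rfl⟩ := IsFractionRing.div_surjective R g
  have hy0 : algebraMap R K y ≠ 0 := IsFractionRing.to_map_ne_zero_of_mem_nonZeroDivisors hy
  have hx0 : algebraMap R K x ≠ 0 := (div_ne_zero_iff.mp hg).1
  have inj := IsFractionRing.injective R K
  have hspan : Ideal.span {x} * 𝔞 = Ideal.span {y} * 𝔞 := by
    apply le_antisymm <;> refine Ideal.span_singleton_mul_le_iff.mpr fun a ha => ?_ <;>
      refine Ideal.mem_span_singleton_mul.mpr ?_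
    · obtain ⟨b, hb, hab⟩ := hmul a ha
      refine ⟨b, hb, inj ?_⟩
      rw [map_mul, map_mul, hab]
      field_simp
    · obtain ⟨b, hb, hab⟩ := hinv a ha
      refine ⟨b, hb, inj ?_⟩
      rw [map_mul, map_mul, hab]
      field_simp
  obtain ⟨u, rfl⟩ := Ideal.span_singleton_eq_span_singleton.mp
    (mul_right_cancel₀ (by rwa [Ne, Submodule.zero_eq_bot]) hspan)
  exact ⟨u⁻¹, by simp [div_mul_cancel_left₀ hx0]⟩

theorem forall_mul_integral_and_exists_unit_of_image_affineMul_eq {S : Set R} {𝔞 : Ideal R}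
    (hS : Ideal.span S = 𝔞) (h𝔞 : 𝔞 ≠ ⊥) {g : K × K} (hg : g.2 ≠ 0)
    (h : (affineMul · g) '' ringProd K S = ringProd K S) :
    (∀ a ∈ 𝔞, ∃ x : R, g.1 * algebraMap R K a = algebraMap R K x) ∧
      ∃ u : Rˣ, algebraMap R K u = g.2 := by
  subst hS
  have hfwd := fun a ha => exists_algebraMap_eq_mul_of_image_subset h.le (a := a) ha
  have hbwd := fun b hb => exists_algebraMap_eq_mul_of_subset_image h.ge (b := b) hb
  refine ⟨fun a ha => ?_, exists_unit_eq_of_mul_ideal_eq h𝔞 hg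
    (fun a ha => exists_algebraMap_eq_mul_of_mem_span (fun s hs => ?_) ha)
    (fun a ha => exists_algebraMap_eq_mul_of_mem_span (fun s hs => ?_) ha)⟩
  · obtain ⟨x, -, hx⟩ := exists_algebraMap_eq_mul_of_mem_span
      (J := ⊤) (fun s hs => (hfwd s hs).1.imp fun x hx => ⟨trivial, hx⟩) ha
    exact ⟨x, by rw [hx, mul_comm]⟩
  · obtain ⟨b, hb, hsb⟩ := (hfwd s hs).2
    exact ⟨b, Ideal.subset_span hb, hsb⟩
  · obtain ⟨b, hb, hsb⟩ := hbwd s hs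
    exact ⟨b, Ideal.subset_span hb, by rw [hsb, mul_inv_cancel_right₀ hg]⟩

end FractionField

theorem ite_nonneg_mul {F : Type*} [Field F] [LinearOrder F] [IsStrictOrderedRing F]
    {x y : F} (hx : x ≠ 0) (hy : y ≠ 0) :
    (if 0 ≤ x * y then (1 : ℤˣ) else -1) =
      (if 0 ≤ x then 1 else -1) * (if 0 ≤ y then 1 else -1) := by
  rcases hx.lt_or_gt with hx | hx <;> rcases hy.lt_or_gt with hy | hy <;>
    simp [mul_nonneg_iff, hx.le, hy.le, hx.not_ge, hy.not_ge]

theorem realSigns_mul {R ι : Type*} [CommRing R] {φ : ι → R →+* ℝ}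
    (hφ : ∀ i, Function.Injective (φ i)) {sgn : R → ι → ℤˣ}
    (hsgn : ∀ a i, sgn a i = if 0 ≤ φ i a then 1 else -1) {x y : R}
    (hx : x ≠ 0) (hy : y ≠ 0) : sgn (x * y) = sgn x * sgn y := by
  funext i
  rw [Pi.mul_apply, hsgn, hsgn, hsgn, map_mul]
  exact ite_nonneg_mul ((map_ne_zero_iff _ (hφ i)).mpr hx) ((map_ne_zero_iff _ (hφ i)).mpr hy)

section CongruenceMonoid

variable {R A : Type*} [CommRing R] [CommGroup A] {m0 : Ideal R}

def congruenceMonoid (Γ : Subgroup (A × (R ⧸ m0)ˣ)) (sgn : R → A) : Set R :=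
  {a | a ≠ 0 ∧ Ideal.span {a} ⊔ m0 = ⊤ ∧
    ∃ u : (R ⧸ m0)ˣ, (u : R ⧸ m0) = Ideal.Quotient.mk m0 a ∧ (sgn a, u) ∈ Γ}

variable {Γ : Subgroup (A × (R ⧸ m0)ˣ)} {sgn : R → A}

theorem mem_congruenceMonoid_of_mul_eq_mul [IsDomain R]
    (hsgn : ∀ {x y : R}, x ≠ 0 → y ≠ 0 → sgn (x * y) = sgn x * sgn y) {a b c d : R}
    (ha : a ∈ congruenceMonoid Γ sgn) (hb : b ∈ congruenceMonoid Γ sgn)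
    (hc : c ∈ congruenceMonoid Γ sgn) (h : d * c = a * b) : d ∈ congruenceMonoid Γ sgn := by
  obtain ⟨ha0, hacop, ua, hua, haΓ⟩ := ha
  obtain ⟨hb0, hbcop, ub, hub, hbΓ⟩ := hb
  obtain ⟨hc0, -, uc, huc, hcΓ⟩ := hc
  have hd0 : d ≠ 0 := left_ne_zero_of_mul (h ▸ mul_ne_zero ha0 hb0)
  refine ⟨hd0, ?_, ua * ub * uc⁻¹, ?_, ?_⟩
  · have hab : Ideal.span {a * b} ⊔ m0 = ⊤ := by
      rw [← Ideal.span_singleton_mul_span_singleton, ← Ideal.isCoprime_iff_sup_eq]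
      exact (Ideal.isCoprime_iff_sup_eq.mpr hacop).mul_left (Ideal.isCoprime_iff_sup_eq.mpr hbcop)
    refine eq_top_mono (sup_le_sup_right ?_ m0) hab
    exact Ideal.span_singleton_le_span_singleton.mpr ⟨c, h.symm⟩
  · rw [Units.val_mul, Units.val_mul, hua, hub, ← map_mul, ← h, map_mul, ← huc,
      Units.mul_inv_cancel_right]
  · have hsd : sgn d = sgn a * sgn b * (sgn c)⁻¹ := by
      rw [← hsgn ha0 hb0, ← h, hsgn hd0 hc0, mul_inv_cancel_right]
    rw [hsd]
    exact mul_mem (mul_mem haΓ hbΓ) (inv_mem hcΓ)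

variable (K : Type*) [Field K] [Algebra R K] in
def congruenceGroup (Γ : Subgroup (A × (R ⧸ m0)ˣ)) (sgn : R → A) : Set K :=
  {x | ∃ a ∈ congruenceMonoid Γ sgn, ∃ b ∈ congruenceMonoid Γ sgn,
    x = algebraMap R K a / algebraMap R K b}

variable {K : Type*} [Field K] [Algebra R K] [IsFractionRing R K]

theorem ne_zero_of_mem_congruenceGroup {x : K} (hx : x ∈ congruenceGroup K Γ sgn) : x ≠ 0 := by
  obtain ⟨a, ha, b, hb, rfl⟩ := hx
  exact div_ne_zero ((map_ne_zero_iff _ (IsFractionRing.injective R K)).mpr ha.1)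
    ((map_ne_zero_iff _ (IsFractionRing.injective R K)).mpr hb.1)

theorem mul_units_mem_congruenceMonoid [IsDomain R]
    (hsgn : ∀ {x y : R}, x ≠ 0 → y ≠ 0 → sgn (x * y) = sgn x * sgn y) {u : Rˣ}
    (hu : algebraMap R K u ∈ congruenceGroup K Γ sgn) {s : R} (hs : s ∈ congruenceMonoid Γ sgn) :
    s * u ∈ congruenceMonoid Γ sgn ∧ s * ↑u⁻¹ ∈ congruenceMonoid Γ sgn := by
  obtain ⟨a, ha, b, hb, hab⟩ := hu
  have hub : (u : R) * b = a := IsFractionRing.injective R K <| by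
    rw [map_mul, hab,
      div_mul_cancel₀ _ ((map_ne_zero_iff _ (IsFractionRing.injective R K)).mpr hb.1)]
  refine ⟨mem_congruenceMonoid_of_mul_eq_mul hsgn hs ha hb ?_,
    mem_congruenceMonoid_of_mul_eq_mul hsgn hs hb ha ?_⟩
  · rw [mul_assoc, hub]
  · rw [mul_assoc, ← hub, Units.inv_mul_cancel_left]

end CongruenceMonoid

open NumberField

open Classical in
theorem stmt10_general {K : Type*} [Field K] [NumberField K]
    (minf : Set (K →+* ℝ)) (m0 : Ideal (𝓞 K))
    (Γ : Subgroup ((minf → ℤˣ) × ((𝓞 K) ⧸ m0)ˣ))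
    (sgn : 𝓞 K → (minf → ℤˣ))
    (hsgn : ∀ (a : 𝓞 K) (w : minf),
      sgn a w = if 0 ≤ (w : K →+* ℝ) (algebraMap (𝓞 K) K a) then 1 else -1)
    (RmΓ : Set (𝓞 K))
    (hRmΓ : RmΓ = {a : 𝓞 K | a ≠ 0 ∧ Ideal.span {a} ⊔ m0 = ⊤ ∧
      ∃ u : ((𝓞 K) ⧸ m0)ˣ, (u : (𝓞 K) ⧸ m0) = Ideal.Quotient.mk m0 a ∧ (sgn a, u) ∈ Γ})
    (Rm : Set (𝓞 K))
    (hRm : Rm = {a : 𝓞 K | a ≠ 0 ∧ Ideal.span {a} ⊔ m0 = ⊤})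
    (RmInvR : Set K)
    (hRmInvR : RmInvR = {x : K | ∃ a : 𝓞 K, ∃ b ∈ Rm,
      x = algebraMap (𝓞 K) K a / algebraMap (𝓞 K) K b})
    (KmΓ : Set K)
    (hKmΓ : KmΓ = {x : K | ∃ a ∈ RmΓ, ∃ b ∈ RmΓ,
      x = algebraMap (𝓞 K) K a / algebraMap (𝓞 K) K b})
    (𝔞 : Ideal (𝓞 K)) (h𝔞 : 𝔞 ≠ ⊥)
    (hBruce : Ideal.span ((𝔞 : Set (𝓞 K)) ∩ RmΓ) = 𝔞)
    (base : Set (K × K))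
    (hbase : base = {q : K × K | (∃ x : 𝓞 K, q.1 = algebraMap (𝓞 K) K x) ∧
      ∃ a ∈ (𝔞 : Set (𝓞 K)) ∩ RmΓ, q.2 = algebraMap (𝓞 K) K a}) :
    {g : K × K | g.1 ∈ RmInvR ∧ g.2 ∈ KmΓ ∧
        (fun q : K × K => (q.1 + q.2 * g.1, q.2 * g.2)) '' base = base}
      = {g : K × K |
          (∀ a ∈ 𝔞, ∃ x : 𝓞 K, g.1 * algebraMap (𝓞 K) K a = algebraMap (𝓞 K) K x)
          ∧ g.2 ∈ KmΓ ∧ ∃ u : (𝓞 K)ˣ, algebraMap (𝓞 K) K (u : 𝓞 K) = g.2} := by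
  obtain ⟨a0, ha0𝔞, ha0⟩ : ((𝔞 : Set (𝓞 K)) ∩ RmΓ).Nonempty := by
    rw [Set.nonempty_iff_ne_empty]
    rintro h
    rw [h, Ideal.span_empty] at hBruce
    exact h𝔞 hBruce.symm
  subst hRmΓ hRm hRmInvR hKmΓ hbase
  have hsgn_mul : ∀ {x y : 𝓞 K}, x ≠ 0 → y ≠ 0 → sgn (x * y) = sgn x * sgn y :=
    realSigns_mul (φ := fun w : minf => (w : K →+* ℝ).comp (algebraMap (𝓞 K) K))
      (fun w => (w : K →+* ℝ).injective.comp (IsFractionRing.injective _ _)) hsgn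
  ext ⟨g1, g2⟩
  constructor
  · rintro ⟨-, hg2, hstab⟩
    obtain ⟨hg1, u, hu⟩ := forall_mul_integral_and_exists_unit_of_image_affineMul_eq hBruce h𝔞
      (ne_zero_of_mem_congruenceGroup hg2) hstab
    exact ⟨hg1, hg2, u, hu⟩
  · rintro ⟨hg1, hg2, u, rfl⟩
    obtain ⟨x, hx⟩ := hg1 a0 ha0𝔞
    have ha0K : algebraMap (𝓞 K) K a0 ≠ 0 :=
      (map_ne_zero_iff _ (IsFractionRing.injective _ _)).mpr ha0.1
    refine ⟨⟨x, a0, ⟨ha0.1, ha0.2.1⟩, (eq_div_iff ha0K).mpr hx⟩, hg2, ?_⟩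
    exact image_affineMul_ringProd Set.inter_subset_left hg1 fun s hs =>
      (mul_units_mem_congruenceMonoid hsgn_mul hg2 hs.2).imp
        (⟨Ideal.mul_mem_right _ _ hs.1, ·⟩) (⟨Ideal.mul_mem_right _ _ hs.1, ·⟩)

open Classical in
/-- Stabilizer computation for `ax+b`-type semigroups attached to congruence monoids:
with `R = 𝓞 K`, a modulus `𝔪 = 𝔪_∞ 𝔪_0` (here `minf` is a set of real embeddings and
`m0` a nonzero ideal), `Γ ≤ (R/𝔪)^*`, `R_{𝔪,Γ}` the congruence monoid,
`K_{𝔪,Γ}` its group of quotients, and `𝔞` a nonzero ideal coprime to `𝔪_0` such that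
`𝔞_{𝔪,Γ} = 𝔞 ∩ R_{𝔪,Γ}` generates `𝔞` (Bruce's lemma), the stabilizer of
`R × 𝔞_{𝔪,Γ}` under the right translation action of `G = (R_𝔪⁻¹R) ⋊ K_{𝔪,Γ}`
(with multiplication `(x,s)(y,t) = (x + sy, st)`) equals `(R:𝔞) ⋊ R^*_{𝔪,Γ}`. -/
theorem stmt10 {K : Type*} [Field K] [NumberField K]
    (minf : Set (K →+* ℝ)) (m0 : Ideal (𝓞 K)) (hm0 : m0 ≠ ⊥)
    (Γ : Subgroup ((minf → ℤˣ) × ((𝓞 K) ⧸ m0)ˣ))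
    (sgn : 𝓞 K → (minf → ℤˣ))
    (hsgn : ∀ (a : 𝓞 K) (w : minf),
      sgn a w = if 0 ≤ (w : K →+* ℝ) (algebraMap (𝓞 K) K a) then 1 else -1)
    (RmΓ : Set (𝓞 K))
    (hRmΓ : RmΓ = {a : 𝓞 K | a ≠ 0 ∧ Ideal.span {a} ⊔ m0 = ⊤ ∧
      ∃ u : ((𝓞 K) ⧸ m0)ˣ, (u : (𝓞 K) ⧸ m0) = Ideal.Quotient.mk m0 a ∧ (sgn a, u) ∈ Γ})
    (Rm : Set (𝓞 K))
    (hRm : Rm = {a : 𝓞 K | a ≠ 0 ∧ Ideal.span {a} ⊔ m0 = ⊤})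
    (RmInvR : Set K)
    (hRmInvR : RmInvR = {x : K | ∃ a : 𝓞 K, ∃ b ∈ Rm,
      x = algebraMap (𝓞 K) K a / algebraMap (𝓞 K) K b})
    (KmΓ : Set K)
    (hKmΓ : KmΓ = {x : K | ∃ a ∈ RmΓ, ∃ b ∈ RmΓ,
      x = algebraMap (𝓞 K) K a / algebraMap (𝓞 K) K b})
    (𝔞 : Ideal (𝓞 K)) (h𝔞 : 𝔞 ≠ ⊥) (hcop : 𝔞 ⊔ m0 = ⊤)
    (hBruce : Ideal.span ((𝔞 : Set (𝓞 K)) ∩ RmΓ) = 𝔞)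
    (base : Set (K × K))
    (hbase : base = {q : K × K | (∃ x : 𝓞 K, q.1 = algebraMap (𝓞 K) K x) ∧
      ∃ a ∈ (𝔞 : Set (𝓞 K)) ∩ RmΓ, q.2 = algebraMap (𝓞 K) K a}) :
    {g : K × K | g.1 ∈ RmInvR ∧ g.2 ∈ KmΓ ∧
        (fun q : K × K => (q.1 + q.2 * g.1, q.2 * g.2)) '' base = base}
      = {g : K × K |
          (∀ a ∈ 𝔞, ∃ x : 𝓞 K, g.1 * algebraMap (𝓞 K) K a = algebraMap (𝓞 K) K x)
          ∧ g.2 ∈ KmΓ ∧ ∃ u : (𝓞 K)ˣ, algebraMap (𝓞 K) K (u : 𝓞 K) = g.2} :=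
  stmt10_general minf m0 Γ sgn hsgn RmΓ hRmΓ Rm hRm RmInvR hRmInvR KmΓ hKmΓ 𝔞 h𝔞 hBruce base hbase
end

section
/- Let G ↷ X be a partial dynamical system of a group G on a set X with domains U_g ⊆ X, and let 𝒱 be a G-invariant family of subsets of X (for all g: 𝒱_{g⁻¹} := {V ∈ 𝒱 : V ⊆ U_{g⁻¹}} satisfies g.𝒱_{g⁻¹} = 𝒱_g). Define S := {(g, V) : g ∈ G, ∅ ≠ V ∈ 𝒱_{g⁻¹}} ∪ {0}, with multiplication (h, W)(g, V) := (hg, g⁻¹.(W ∩ g.V)) if W ∩ g.V ≠ ∅ and 0 otherwise, assuming 𝒱 is closed under the operations V, W ↦ g⁻¹.(W ∩ g.V) whenever nonempty. Then S is an inverse semigroup with zero, (g, V)⁻¹ = (g⁻¹, g.V), and its nonzero idempotents are exactly the elements (1, V) for ∅ ≠ V ∈ 𝒱. Moreover, σ : S \ {0} → G, (g, V) ↦ g, is an idempotent pure partial homomorphism. -/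
/-- A partial dynamical system `G ↷ X`: subsets `U g ⊆ X` and (totalized) maps
`act g : X → X` restricting to bijections `U g⁻¹ → U g`, satisfying the partial
action axioms. -/
structure PartialDynSys (G X : Type*) [Group G] where
  U : G → Set X
  act : G → X → X
  U_one : U 1 = Set.univ
  act_one : ∀ x, act 1 x = x
  bijOn : ∀ g, Set.BijOn (act g) (U g⁻¹) (U g)
  image_eq : ∀ g h, act h '' (U (g * h)⁻¹ ∩ U h⁻¹) = U h ∩ U g⁻¹
  act_mul : ∀ g h x, x ∈ U (g * h)⁻¹ → x ∈ U h⁻¹ → act (g * h) x = act g (act h x)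

namespace PartialDynSys

variable {G X : Type*} [Group G] (A : PartialDynSys G X)

open Classical in
/-- The product `(h, W)(g, V) = (hg, g⁻¹.(W ∩ g.V))` if `W ∩ g.V ≠ ∅`, and `0`
otherwise. -/
noncomputable def pmul (p q : G × Set X) : Option (G × Set X) :=
  if p.2 ∩ A.act q.1 '' q.2 = ∅ then none
  else some (p.1 * q.1, A.act q.1⁻¹ '' (p.2 ∩ A.act q.1 '' q.2))

/-- The multiplication on `S = {(g,V)} ∪ {0}`, encoded on `Option (G × Set X)` with
`0 = none`. -/
noncomputable def smul (s t : Option (G × Set X)) : Option (G × Set X) :=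
  s.bind fun p => t.bind fun q => A.pmul p q

/-- The involution `(g, V)⁻¹ = (g⁻¹, g.V)`, `0⁻¹ = 0`. -/
def sinv (s : Option (G × Set X)) : Option (G × Set X) :=
  s.map fun p => (p.1⁻¹, A.act p.1 '' p.2)

/-- The carrier `S = {(g,V) : g ∈ G, ∅ ≠ V ∈ 𝒱_{g⁻¹}} ∪ {0}`. -/
def carrier (𝒱 : Set (Set X)) : Set (Option (G × Set X)) :=
  {s | s = none ∨ ∃ g V, s = some (g, V) ∧ V ∈ 𝒱 ∧ V ⊆ A.U g⁻¹ ∧ V ≠ ∅}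

end PartialDynSys

/-!
Think of `(g, V)` as the partial bijection `x ↦ g.x` with domain `V`; the product is then
composition of partial bijections, with `0` for the empty composite. Both bracketings of a
triple product `(k, Z)(h, W)(g, V)` are governed by the same overlap `Z ∩ h.(W ∩ g.V)`,
which gives associativity. Since `σ` is multiplicative, `(g, V)² = (g, V)` forces `g = 1`,
and `sts = s`, `tst = t` force `σ t = (σ s)⁻¹` and make the domain of `t` equal to `g.V`.
-/

namespace PartialDynSys

variable {G X : Type*} [Group G] (A : PartialDynSys G X) {g h k : G} {V W Z : Set X}

lemma leftInvOn_act (g : G) : Set.LeftInvOn (A.act g⁻¹) (A.act g) (A.U g⁻¹) := fun x hx => by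
  simpa [A.U_one, A.act_one] using (A.act_mul g⁻¹ g x (by simp [A.U_one]) hx).symm

lemma image_inv_image (hV : V ⊆ A.U g⁻¹) : A.act g⁻¹ '' (A.act g '' V) = V :=
  (A.leftInvOn_act g).image_image' hV

lemma image_image_inv (hV : V ⊆ A.U g) : A.act g '' (A.act g⁻¹ '' V) = V := by
  simpa using A.image_inv_image (g := g⁻¹) (by simpa using hV)

lemma image_subset_U (hV : V ⊆ A.U g⁻¹) : A.act g '' V ⊆ A.U g :=
  ((A.bijOn g).mapsTo.mono_left hV).image_subset

lemma image_one (V : Set X) : A.act 1 '' V = V := by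
  simp [funext A.act_one]

lemma image_inv_U_inter_U (g h : G) :
    A.act g⁻¹ '' (A.U g ∩ A.U h⁻¹) = A.U (h * g)⁻¹ ∩ A.U g⁻¹ := by
  rw [← A.image_eq h g, A.image_inv_image Set.inter_subset_right]

lemma image_mul_of_subset {S : Set X} (hS : S ⊆ A.U (g * h)⁻¹ ∩ A.U h⁻¹) :
    A.act (g * h) '' S = A.act g '' (A.act h '' S) := by
  rw [Set.image_image]
  exact Set.image_congr fun x hx => A.act_mul g h x (hS hx).1 (hS hx).2

lemma inter_image_subset (hV : V ⊆ A.U g⁻¹) (hW : W ⊆ A.U h⁻¹) :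
    W ∩ A.act g '' V ⊆ A.U g ∩ A.U h⁻¹ :=
  fun _ hx => ⟨A.image_subset_U hV hx.2, hW hx.1⟩

lemma image_inv_inter_image_subset (hV : V ⊆ A.U g⁻¹) (hW : W ⊆ A.U h⁻¹) :
    A.act g⁻¹ '' (W ∩ A.act g '' V) ⊆ A.U (h * g)⁻¹ ∩ A.U g⁻¹ := by
  rw [← A.image_inv_U_inter_U]
  exact Set.image_mono (A.inter_image_subset hV hW)

lemma image_mul_image_inv_inter_image (hV : V ⊆ A.U g⁻¹) (hW : W ⊆ A.U h⁻¹) :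
    A.act (h * g) '' (A.act g⁻¹ '' (W ∩ A.act g '' V)) = A.act h '' (W ∩ A.act g '' V) := by
  rw [A.image_mul_of_subset (A.image_inv_inter_image_subset hV hW),
    A.image_image_inv fun _ hx => (A.inter_image_subset hV hW hx).1]

lemma image_mul_inv_of_subset (hV : V ⊆ A.U g⁻¹) (hW : W ⊆ A.U h⁻¹) {E : Set X}
    (hE : E ⊆ A.act h '' (W ∩ A.act g '' V)) :
    A.act (h * g)⁻¹ '' E = A.act g⁻¹ '' (A.act h⁻¹ '' E) := by
  have hdom := A.image_inv_U_inter_U h⁻¹ g⁻¹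
  simp only [inv_inv] at hdom
  rw [mul_inv_rev]
  refine A.image_mul_of_subset ?_
  simp only [inv_inv]
  rw [← hdom]
  exact hE.trans <| Set.image_mono fun _ hx =>
    ⟨(A.inter_image_subset hV hW hx).2, (A.inter_image_subset hV hW hx).1⟩

lemma image_inv_inter_image_inter (hW : W ⊆ A.U h⁻¹) (Y : Set X) :
    A.act h⁻¹ '' (Z ∩ A.act h '' W) ∩ Y = A.act h⁻¹ '' (Z ∩ A.act h '' (W ∩ Y)) := by
  ext x
  constructor
  · rintro ⟨⟨_, ⟨hz, w, hw, rfl⟩, rfl⟩, hx⟩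
    rw [A.leftInvOn_act h (hW hw)] at hx ⊢
    exact ⟨A.act h w, ⟨hz, w, ⟨hw, hx⟩, rfl⟩, A.leftInvOn_act h (hW hw)⟩
  · rintro ⟨_, ⟨hz, w, ⟨hw, hwY⟩, rfl⟩, rfl⟩
    rw [A.leftInvOn_act h (hW hw)]
    exact ⟨⟨A.act h w, ⟨hz, w, hw, rfl⟩, A.leftInvOn_act h (hW hw)⟩, hwY⟩

@[simp] lemma smul_none_left (s : Option (G × Set X)) : A.smul none s = none := rfl

@[simp] lemma smul_none_right (s : Option (G × Set X)) : A.smul s none = none := by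
  cases s <;> rfl

lemma smul_some_some (p q : G × Set X) : A.smul (some p) (some q) = A.pmul p q := rfl

lemma pmul_of_eq_empty (hc : W ∩ A.act g '' V = ∅) : A.pmul (h, W) (g, V) = none := by
  simp [pmul, hc]

lemma pmul_of_ne_empty (hc : W ∩ A.act g '' V ≠ ∅) :
    A.pmul (h, W) (g, V) = some (h * g, A.act g⁻¹ '' (W ∩ A.act g '' V)) := by
  simp [pmul, hc]

lemma pmul_eq_some_fst {p q r : G × Set X} (hpq : A.pmul p q = some r) : r.1 = p.1 * q.1 := by
  unfold pmul at hpq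
  split_ifs at hpq
  cases hpq
  rfl

lemma pmul_of_image_subset (hV : V ⊆ A.U g⁻¹) (hne : V ≠ ∅) (hVW : A.act g '' V ⊆ W) :
    A.pmul (h, W) (g, V) = some (h * g, V) := by
  have hc : W ∩ A.act g '' V = A.act g '' V := Set.inter_eq_right.mpr hVW
  rw [pmul_of_ne_empty _ (by rwa [hc, Ne, Set.image_eq_empty]), hc, A.image_inv_image hV]

lemma pmul_self_eq_self_iff (hne : V ≠ ∅) : A.pmul (g, V) (g, V) = some (g, V) ↔ g = 1 := by
  refine ⟨fun h => mul_eq_left.mp (A.pmul_eq_some_fst h).symm, ?_⟩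
  rintro rfl
  simpa using A.pmul_of_image_subset (by simp [A.U_one]) hne (A.image_one V).le

open Classical in
noncomputable def pmul₃ (p q r : G × Set X) : Option (G × Set X) :=
  if p.2 ∩ A.act q.1 '' (q.2 ∩ A.act r.1 '' r.2) = ∅ then none
  else some (p.1 * q.1 * r.1,
    A.act (q.1 * r.1)⁻¹ '' (p.2 ∩ A.act q.1 '' (q.2 ∩ A.act r.1 '' r.2)))

lemma smul_smul_some_left (hV : V ⊆ A.U g⁻¹) (hW : W ⊆ A.U h⁻¹) :
    A.smul (A.smul (some (k, Z)) (some (h, W))) (some (g, V)) = A.pmul₃ (k, Z) (h, W) (g, V) := by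
  by_cases hZW : Z ∩ A.act h '' W = ∅
  · have hE : Z ∩ A.act h '' (W ∩ A.act g '' V) = ∅ := Set.subset_empty_iff.mp <|
      hZW ▸ Set.inter_subset_inter_right _ (Set.image_mono Set.inter_subset_left)
    simp [smul_some_some, pmul_of_eq_empty _ hZW, pmul₃, hE]
  · rw [smul_some_some, pmul_of_ne_empty _ hZW, smul_some_some]
    simp only [pmul, pmul₃, A.image_inv_inter_image_inter hW, Set.image_eq_empty,
      ← A.image_mul_inv_of_subset hV hW Set.inter_subset_right]

lemma smul_smul_some_right (hV : V ⊆ A.U g⁻¹) (hW : W ⊆ A.U h⁻¹) :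
    A.smul (some (k, Z)) (A.smul (some (h, W)) (some (g, V))) = A.pmul₃ (k, Z) (h, W) (g, V) := by
  by_cases hWV : W ∩ A.act g '' V = ∅
  · simp [smul_some_some, pmul_of_eq_empty _ hWV, pmul₃, hWV]
  · rw [smul_some_some, pmul_of_ne_empty _ hWV, smul_some_some]
    simp only [pmul, pmul₃, A.image_mul_image_inv_inter_image hV hW, mul_assoc]

lemma eq_inv_and_image_subset_of_pmul₃_eq (hV : V ⊆ A.U g⁻¹)
    (hsts : A.pmul₃ (g, V) (h, W) (g, V) = some (g, V)) : h = g⁻¹ ∧ A.act g '' V ⊆ W := by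
  unfold pmul₃ at hsts
  split_ifs at hsts
  obtain ⟨hmul, hset⟩ := Prod.mk.inj (Option.some_inj.mp hsts)
  obtain rfl : h = g⁻¹ := eq_inv_of_mul_eq_one_right (mul_eq_right.mp hmul)
  simp only [inv_mul_cancel, inv_one, A.image_one, Set.inter_eq_left] at hset
  refine ⟨rfl, ?_⟩
  calc A.act g '' V ⊆ A.act g '' (A.act g⁻¹ '' (W ∩ A.act g '' V)) := Set.image_mono hset
    _ = W ∩ A.act g '' V := A.image_image_inv fun _ hx => A.image_subset_U hV hx.2
    _ ⊆ W := Set.inter_subset_left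

variable {𝒱 : Set (Set X)}

lemma mem_carrier_some_iff :
    some (g, V) ∈ A.carrier 𝒱 ↔ V ∈ 𝒱 ∧ V ⊆ A.U g⁻¹ ∧ V ≠ ∅ := by
  simp [carrier]

lemma smul_mem_carrier
    (hclosed : ∀ (g h : G) (V W : Set X), V ∈ 𝒱 → V ⊆ A.U g⁻¹ → W ∈ 𝒱 → W ⊆ A.U h⁻¹ →
      W ∩ A.act g '' V ≠ ∅ → A.act g⁻¹ '' (W ∩ A.act g '' V) ∈ 𝒱)
    {s t : Option (G × Set X)} (hs : s ∈ A.carrier 𝒱) (ht : t ∈ A.carrier 𝒱) :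
    A.smul s t ∈ A.carrier 𝒱 := by
  rcases hs with rfl | ⟨h, W, rfl, hW𝒱, hW, -⟩
  · exact Or.inl rfl
  rcases ht with rfl | ⟨g, V, rfl, hV𝒱, hV, -⟩
  · exact Or.inl rfl
  by_cases hc : W ∩ A.act g '' V = ∅
  · exact Or.inl (A.pmul_of_eq_empty hc)
  · exact Or.inr ⟨h * g, _, A.pmul_of_ne_empty hc, hclosed g h V W hV𝒱 hV hW𝒱 hW hc,
      fun _ hx => (A.image_inv_inter_image_subset hV hW hx).1, Set.image_eq_empty.not.mpr hc⟩

lemma smul_assoc_of_mem_carrier (s : Option (G × Set X)) {t u : Option (G × Set X)}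
    (ht : t ∈ A.carrier 𝒱) (hu : u ∈ A.carrier 𝒱) :
    A.smul (A.smul s t) u = A.smul s (A.smul t u) := by
  rcases ht with rfl | ⟨h, W, rfl, -, hW, -⟩
  · simp
  rcases hu with rfl | ⟨g, V, rfl, -, hV, -⟩
  · simp
  rcases s with _ | ⟨k, Z⟩
  · rfl
  · rw [A.smul_smul_some_left hV hW, A.smul_smul_some_right hV hW]

lemma sinv_mem_carrier
    (h𝒱 : ∀ (g : G) (V : Set X), V ∈ 𝒱 → V ⊆ A.U g⁻¹ → A.act g '' V ∈ 𝒱)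
    {s : Option (G × Set X)} (hs : s ∈ A.carrier 𝒱) : A.sinv s ∈ A.carrier 𝒱 := by
  rcases hs with rfl | ⟨g, V, rfl, hV𝒱, hV, hne⟩
  · exact Or.inl rfl
  · exact Or.inr ⟨g⁻¹, _, rfl, h𝒱 g V hV𝒱 hV, by simpa using A.image_subset_U hV,
      Set.image_eq_empty.not.mpr hne⟩

lemma smul_smul_sinv_self {s : Option (G × Set X)} (hs : s ∈ A.carrier 𝒱) :
    A.smul (A.smul s (A.sinv s)) s = s := by
  rcases hs with rfl | ⟨g, V, rfl, -, hV, hne⟩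
  · rfl
  have hs_sinv : A.pmul (g, V) (g⁻¹, A.act g '' V) = some (1, A.act g '' V) := by
    rw [A.pmul_of_image_subset (h := g) (by simpa using A.image_subset_U hV)
      (Set.image_eq_empty.not.mpr hne) (A.image_inv_image hV).le, mul_inv_cancel]
  change A.smul (A.pmul (g, V) (g⁻¹, A.act g '' V)) (some (g, V)) = some (g, V)
  rw [hs_sinv, smul_some_some, A.pmul_of_image_subset hV hne le_rfl, one_mul]

lemma smul_smul_sinv_sinv {s : Option (G × Set X)} (hs : s ∈ A.carrier 𝒱) :
    A.smul (A.smul (A.sinv s) s) (A.sinv s) = A.sinv s := by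
  rcases hs with rfl | ⟨g, V, rfl, -, hV, hne⟩
  · rfl
  have hsinv_s : A.pmul (g⁻¹, A.act g '' V) (g, V) = some (1, V) := by
    rw [A.pmul_of_image_subset hV hne le_rfl, inv_mul_cancel]
  change A.smul (A.pmul (g⁻¹, A.act g '' V) (g, V)) (some (g⁻¹, A.act g '' V)) = _
  rw [hsinv_s, smul_some_some, A.pmul_of_image_subset (by simpa using A.image_subset_U hV)
    (Set.image_eq_empty.not.mpr hne) (A.image_inv_image hV).le, one_mul]
  rfl

lemma eq_sinv_of_mem_carrier {s t : Option (G × Set X)} (hs : s ∈ A.carrier 𝒱)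
    (ht : t ∈ A.carrier 𝒱) (hsts : A.smul (A.smul s t) s = s)
    (htst : A.smul (A.smul t s) t = t) : t = A.sinv s := by
  rcases hs with rfl | ⟨g, V, rfl, -, hV, -⟩ <;> rcases ht with rfl | ⟨h, W, rfl, -, hW, -⟩
  · rfl
  · simp at htst
  · simp at hsts
  rw [A.smul_smul_some_left hV hW] at hsts
  rw [A.smul_smul_some_left hW hV] at htst
  obtain ⟨rfl, hVW⟩ := A.eq_inv_and_image_subset_of_pmul₃_eq hV hsts
  obtain ⟨-, hWV⟩ := A.eq_inv_and_image_subset_of_pmul₃_eq hW htst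
  have hW' : W ⊆ A.U g := by simpa using hW
  have hWV' : W ⊆ A.act g '' V := by
    simpa [A.image_image_inv hW'] using Set.image_mono (f := A.act g) hWV
  rw [← hVW.antisymm hWV']
  rfl

lemma smul_self_eq_self_iff {s : Option (G × Set X)} (hs : s ∈ A.carrier 𝒱)
    (hs0 : s ≠ none) :
    A.smul s s = s ↔ ∃ V ∈ 𝒱, V ≠ ∅ ∧ s = some (1, V) := by
  rcases hs with rfl | ⟨g, V, rfl, hV𝒱, -, hne⟩
  · exact absurd rfl hs0
  rw [smul_some_some, A.pmul_self_eq_self_iff hne]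
  constructor
  · rintro rfl
    exact ⟨V, hV𝒱, hne, rfl⟩
  · rintro ⟨_, -, -, h1V⟩
    exact (Prod.mk.inj (Option.some_inj.mp h1V)).1

end PartialDynSys

/-- Given a partial dynamical system `G ↷ X` and a `G`-invariant family `𝒱` of subsets
of `X` (closed under the relevant operations), the set
`S = {(g,V) : ∅ ≠ V ∈ 𝒱_{g⁻¹}} ∪ {0}` with the product
`(h,W)(g,V) = (hg, g⁻¹.(W ∩ g.V))` (or `0`) is an inverse semigroup with zero with
`(g,V)⁻¹ = (g⁻¹, g.V)`, its nonzero idempotents are exactly the `(1,V)` for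
`∅ ≠ V ∈ 𝒱`, and `σ(g,V) = g` is an idempotent pure partial homomorphism. -/
theorem stmt12 {G X : Type*} [Group G] (A : PartialDynSys G X)
    (𝒱 : Set (Set X))
    (hGinv : ∀ g : G, (Set.image (A.act g)) '' {V | V ∈ 𝒱 ∧ V ⊆ A.U g⁻¹}
      = {V | V ∈ 𝒱 ∧ V ⊆ A.U g})
    (hclosed : ∀ (g h : G) (V W : Set X), V ∈ 𝒱 → V ⊆ A.U g⁻¹ → W ∈ 𝒱 → W ⊆ A.U h⁻¹ →
      W ∩ A.act g '' V ≠ ∅ → A.act g⁻¹ '' (W ∩ A.act g '' V) ∈ 𝒱) :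
    -- S is closed under multiplication
    (∀ s ∈ A.carrier 𝒱, ∀ t ∈ A.carrier 𝒱, A.smul s t ∈ A.carrier 𝒱) ∧
    -- multiplication is associative on S
    (∀ s ∈ A.carrier 𝒱, ∀ t ∈ A.carrier 𝒱, ∀ u ∈ A.carrier 𝒱,
      A.smul (A.smul s t) u = A.smul s (A.smul t u)) ∧
    -- 0 is a zero element
    (∀ s : Option (G × Set X), A.smul none s = none ∧ A.smul s none = none) ∧
    -- sinv is a generalized inverse: s s⁻¹ s = s and s⁻¹ s s⁻¹ = s⁻¹, with
    -- (g,V)⁻¹ = (g⁻¹, g.V)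
    (∀ s ∈ A.carrier 𝒱, A.sinv s ∈ A.carrier 𝒱 ∧
      A.smul (A.smul s (A.sinv s)) s = s ∧
      A.smul (A.smul (A.sinv s) s) (A.sinv s) = A.sinv s) ∧
    (∀ (g : G) (V : Set X), A.sinv (some (g, V)) = some (g⁻¹, A.act g '' V)) ∧
    -- uniqueness of generalized inverses (so S is an inverse semigroup)
    (∀ s ∈ A.carrier 𝒱, ∀ t ∈ A.carrier 𝒱,
      A.smul (A.smul s t) s = s → A.smul (A.smul t s) t = t → t = A.sinv s) ∧
    -- the nonzero idempotents are exactly the (1, V), ∅ ≠ V ∈ 𝒱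
    (∀ s ∈ A.carrier 𝒱, s ≠ none →
      (A.smul s s = s ↔ ∃ V ∈ 𝒱, V ≠ ∅ ∧ s = some ((1 : G), V))) ∧
    -- σ(g,V) = g is a partial homomorphism ...
    (∀ p q : G × Set X, some p ∈ A.carrier 𝒱 → some q ∈ A.carrier 𝒱 →
      A.smul (some p) (some q) ≠ none →
      ∃ r : G × Set X, A.smul (some p) (some q) = some r ∧ r.1 = p.1 * q.1) ∧
    -- ... which is idempotent pure
    (∀ p : G × Set X, some p ∈ A.carrier 𝒱 →
      (p.1 = 1 ↔ A.smul (some p) (some p) = some p)) := by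
  have h𝒱 : ∀ (g : G) (V : Set X), V ∈ 𝒱 → V ⊆ A.U g⁻¹ → A.act g '' V ∈ 𝒱 :=
    fun g V hV𝒱 hV => ((hGinv g).subset ⟨V, ⟨hV𝒱, hV⟩, rfl⟩).1
  refine ⟨fun s hs t ht => A.smul_mem_carrier hclosed hs ht,
    fun s _ t ht u hu => A.smul_assoc_of_mem_carrier s ht hu,
    fun s => ⟨rfl, A.smul_none_right s⟩,
    fun s hs => ⟨A.sinv_mem_carrier h𝒱 hs, A.smul_smul_sinv_self hs, A.smul_smul_sinv_sinv hs⟩,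
    fun g V => rfl,
    fun s hs t ht => A.eq_sinv_of_mem_carrier hs ht,
    fun s hs => A.smul_self_eq_self_iff hs,
    fun p q _ _ hpq => ?_,
    fun ⟨g, V⟩ hp => (A.pmul_self_eq_self_iff (A.mem_carrier_some_iff.mp hp).2.2).symm⟩
  obtain ⟨r, hr⟩ := Option.ne_none_iff_exists'.mp hpq
  exact ⟨r, hr, A.pmul_eq_some_fst hr⟩
end

section
/- Let P be a subsemigroup of a group G. For each nonzero partial bijection s ∈ I_l(P) (the left inverse hull of P), there is a unique g ∈ G such that s(x) = g·x for all x in the domain of s; and the resulting map σ : I_l(P) \ {0} → G is an idempotent pure partial homomorphism. -/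
/-!
Every generator `x ↦ px` is a restriction of left multiplication by `p`, and relations contained
in the graph of `x ↦ gx` are closed under inversion (with `g⁻¹`) and composition (with the
product). A nonempty such relation determines `g` by right cancellation in `G`, which gives
uniqueness and the partial homomorphism property; idempotent purity follows since the identity
relation on the domain is implemented by `1`.
-/

namespace Stmt13

variable {G : Type*} [Group G]

/-- The graph of the left-multiplication map `P → pP`, `x ↦ px`, as a relation on `G`
supported on the subsemigroup `P`. -/
def graph (P : Subsemigroup G) (p : G) : Set (G × G) :=
  {q | q.1 ∈ P ∧ q.2 = p * q.1}

/-- Composition of relations (partial maps). -/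
def rcomp (R S : Set (G × G)) : Set (G × G) := {q | ∃ y, (q.1, y) ∈ S ∧ (y, q.2) ∈ R}

/-- The (set-theoretic) inverse of a relation. -/
def rflip (R : Set (G × G)) : Set (G × G) := {q | (q.2, q.1) ∈ R}

/-- The left inverse hull `I_l(P)`: partial bijections of `P` generated by the left
multiplication maps `x ↦ px`, `p ∈ P`, under composition and inversion (the empty
relation is the zero element). -/
inductive Gen (P : Subsemigroup G) : Set (G × G) → Prop
  | basic (p : G) (hp : p ∈ P) : Gen P (graph P p)
  | zero : Gen P ∅
  | flip {R : Set (G × G)} : Gen P R → Gen P (rflip R)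
  | comp {R S : Set (G × G)} : Gen P R → Gen P S → Gen P (rcomp R S)

def IsLeftMul (R : Set (G × G)) (g : G) : Prop := ∀ q ∈ R, q.2 = g * q.1

namespace IsLeftMul

variable {R S : Set (G × G)} {g h : G}

lemma rflip (hR : IsLeftMul R g) : IsLeftMul (rflip R) g⁻¹ := fun _ hq =>
  eq_inv_mul_of_mul_eq (hR _ hq).symm

lemma rcomp (hR : IsLeftMul R g) (hS : IsLeftMul S h) : IsLeftMul (rcomp R S) (g * h) := by
  rintro q ⟨y, hyS, hyR⟩
  calc q.2 = g * y := hR _ hyR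
    _ = g * (h * q.1) := congrArg (g * ·) (hS _ hyS)
    _ = g * h * q.1 := (mul_assoc g h q.1).symm

lemma unique (hne : R.Nonempty) (hg : IsLeftMul R g) (hh : IsLeftMul R h) : g = h :=
  let ⟨q, hq⟩ := hne
  mul_right_cancel ((hg q hq).symm.trans (hh q hq))

lemma eq_one_iff (hne : R.Nonempty) (hg : IsLeftMul R g) : g = 1 ↔ ∀ q ∈ R, q.1 = q.2 := by
  refine ⟨fun h1 q hq => ?_, fun hid => hg.unique hne fun q hq => ?_⟩
  · rw [hg q hq, h1, one_mul]
  · rw [one_mul, hid q hq]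

end IsLeftMul

lemma Gen.exists_isLeftMul {P : Subsemigroup G} {R : Set (G × G)} (hR : Gen P R) :
    ∃ g, IsLeftMul R g := by
  induction hR with
  | basic p _ => exact ⟨p, fun _ hq => hq.2⟩
  | zero => exact ⟨1, fun _ hq => hq.elim⟩
  | flip _ ih =>
    obtain ⟨g, hg⟩ := ih
    exact ⟨g⁻¹, hg.rflip⟩
  | comp _ _ ihR ihS =>
    obtain ⟨g, hg⟩ := ihR
    obtain ⟨h, hh⟩ := ihS
    exact ⟨g * h, hg.rcomp hh⟩

/-- If `P` is a subsemigroup of a group `G`, then every nonzero element of `I_l(P)` is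
given by left multiplication by a unique group element; the resulting map
`σ : I_l(P) \ {0} → G` is an idempotent pure partial homomorphism. -/
theorem stmt13 (P : Subsemigroup G) :
    -- unique group element implementing each nonzero partial bijection
    (∀ R : Set (G × G), Gen P R → R ≠ ∅ →
      ∃! g : G, ∀ q ∈ R, q.2 = g * q.1) ∧
    -- σ is a partial homomorphism
    (∀ R S : Set (G × G), Gen P R → Gen P S → R ≠ ∅ → S ≠ ∅ → rcomp R S ≠ ∅ →
      ∀ g h j : G, (∀ q ∈ R, q.2 = g * q.1) → (∀ q ∈ S, q.2 = h * q.1) →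
        (∀ q ∈ rcomp R S, q.2 = j * q.1) → j = g * h) ∧
    -- σ is idempotent pure
    (∀ R : Set (G × G), Gen P R → R ≠ ∅ → ∀ g : G, (∀ q ∈ R, q.2 = g * q.1) →
      (g = 1 ↔ ∀ q ∈ R, q.1 = q.2)) := by
  refine ⟨fun R hR hne => ?_, fun R S _ _ _ _ hne g h j hg hh hj => ?_,
    fun R _ hne g hg => ?_⟩
  · obtain ⟨g, hg⟩ := hR.exists_isLeftMul
    exact ⟨g, hg, fun _ hg' => IsLeftMul.unique (Set.nonempty_iff_ne_empty.mpr hne) hg' hg⟩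
  · exact IsLeftMul.unique (Set.nonempty_iff_ne_empty.mpr hne) hj (IsLeftMul.rcomp hg hh)
  · exact IsLeftMul.eq_one_iff (Set.nonempty_iff_ne_empty.mpr hne) hg

end Stmt13
end
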